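/- For vectors x, y ∈ ℂⁿ, the nuclear norm of the difference of the rank-one Hermitian matrices x x* and y y* satisfies ‖x x* − y y*‖₁ = sqrt((‖x‖₂² + ‖y‖₂²)² − 4 |⟨x,y⟩_ℂ|²), i.e. it equals d(x,y) = min_{u∈U(1)} ‖x − u y‖₂·‖x + u y‖₂. Equivalently, the eigenvalues of x x* − y y* other than zero are λ_± = (1/2)(‖x‖₂² − ‖y‖₂² ± sqrt((‖x‖₂²+‖y‖₂²)² − 4|⟨x,y⟩_ℂ|²)). -/

import Mathlib

open Matrix Filter
open scoped ComplexOrder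

noncomputable def frob {p q : ℕ} (x : Matrix (Fin p) (Fin q) ℂ) : ℝ :=
  Real.sqrt (Matrix.trace (xᴴ * x)).re

noncomputable def rinner {p q : ℕ} (X Y : Matrix (Fin p) (Fin q) ℂ) : ℝ :=
  (Matrix.trace (Xᴴ * Y)).re

/-- The positive semidefinite square root of a positive semidefinite matrix, as
`Matrix.PosSemidef.sqrt` was defined in the older Mathlib. -/
noncomputable def posSemidefSqrtOld {m : Type*} [Fintype m] [DecidableEq m] {A : Matrix m m ℂ}
    (hA : A.PosSemidef) : Matrix m m ℂ :=
  hA.1.eigenvectorUnitary.1 * diagonal ((↑) ∘ (√·) ∘ hA.1.eigenvalues) *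
    (star hA.1.eigenvectorUnitary : Matrix m m ℂ)

noncomputable def nuclear {p q : ℕ} (x : Matrix (Fin p) (Fin q) ℂ) : ℝ :=
  (Matrix.trace (posSemidefSqrtOld (Matrix.posSemidef_conjTranspose_mul_self x))).re

noncomputable def theta {n r : ℕ} (x : Matrix (Fin n) (Fin r) ℂ) : Matrix (Fin n) (Fin n) ℂ :=
  posSemidefSqrtOld (Matrix.posSemidef_self_mul_conjTranspose x)

noncomputable def psi {n r : ℕ} (x : Matrix (Fin n) (Fin r) ℂ) : Matrix (Fin n) (Fin n) ℂ :=
  frob x • theta x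

noncomputable def Dmet {n r : ℕ} (x y : Matrix (Fin n) (Fin r) ℂ) : ℝ :=
  ⨅ U : Matrix.unitaryGroup (Fin r) ℂ, frob (x - y * (U : Matrix (Fin r) (Fin r) ℂ))

noncomputable def dmet {n r : ℕ} (x y : Matrix (Fin n) (Fin r) ℂ) : ℝ :=
  ⨅ U : Matrix.unitaryGroup (Fin r) ℂ,
    frob (x - y * (U : Matrix (Fin r) (Fin r) ℂ)) * frob (x + y * (U : Matrix (Fin r) (Fin r) ℂ))

/-!
Rotating `y` by a unit scalar `u` with `u ⟨x, y⟩ = |⟨x, y⟩|` leaves `y y*` unchanged and makes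
`⟨x, u y⟩` real. When `⟨x, y⟩` is real, `p = x - y` and `q = x + y` have real inner product and
`x x* - y y* = (p q* + q p*) / 2`, whose absolute value is the positive semidefinite matrix
`(‖q‖² p p* + ‖p‖² q q*) / (2 ‖p‖ ‖q‖)` of trace `‖p‖ ‖q‖`. Hence the nuclear norm is
`‖x - u y‖ ‖x + u y‖ = √((‖x‖² + ‖y‖²)² - 4 Re(u ⟨x, y⟩)²)`, which is minimal at the rotation above.
For the eigenvalues, `x x* - y y* = A B` with `A = [x y]` and `B = [x*; -y*]`, and the nonzero
eigenvalues of `A B` are those of the `2 × 2` matrix `B A`.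
-/

open Complex ComplexConjugate

section Vectors

variable {n : Type*} [Fintype n]

lemma star_dotProduct_self_eq_sum_normSq (v : n → ℂ) :
    star v ⬝ᵥ v = ((∑ i, normSq (v i) : ℝ) : ℂ) := by
  push_cast
  simp [dotProduct, normSq_eq_conj_mul_self]

lemma star_dotProduct_comm (x y : n → ℂ) : star y ⬝ᵥ x = conj (star x ⬝ᵥ y) := by
  simp [dotProduct, mul_comm]

lemma sum_normSq_add_mul (x y : n → ℂ) (u : ℂ) :
    ∑ i, normSq (x i + u * y i) =
      ∑ i, normSq (x i) + normSq u * ∑ i, normSq (y i) + 2 * (u * (star x ⬝ᵥ y)).re := by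
  have hcross : ∑ i, (x i * conj (u * y i)).re = (u * (star x ⬝ᵥ y)).re := by
    have : ∑ i, x i * conj (u * y i) = conj (u * (star x ⬝ᵥ y)) := by
      simp only [dotProduct, Finset.mul_sum, map_sum, map_mul, Pi.star_apply, star_def,
        conj_conj]
      exact Finset.sum_congr rfl fun i _ => by ring
    rw [← re_sum, this, conj_re]
  simp only [normSq_add, Finset.sum_add_distrib, map_mul normSq, ← Finset.mul_sum, hcross]

lemma exists_norm_eq_one_mul_eq_norm (c : ℂ) : ∃ u : ℂ, ‖u‖ = 1 ∧ u * c = ‖c‖ := by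
  refine ⟨exp (-(arg c) * I), by simpa using norm_exp_ofReal_mul_I (-arg c), ?_⟩
  conv_lhs => rw [← norm_mul_exp_arg_mul_I c]
  rw [mul_left_comm, ← exp_add]
  simp

lemma two_mul_norm_dotProduct_le (x y : n → ℂ) :
    2 * ‖star x ⬝ᵥ y‖ ≤ ∑ i, normSq (x i) + ∑ i, normSq (y i) := by
  obtain ⟨u, hu, huc⟩ := exists_norm_eq_one_mul_eq_norm (star x ⬝ᵥ y)
  have h := sum_normSq_add_mul x y (-u)
  rw [neg_mul, neg_re, huc, normSq_neg, normSq_eq_norm_sq, hu] at h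
  have : 0 ≤ ∑ i, normSq (x i + -u * y i) := Finset.sum_nonneg fun i _ => normSq_nonneg _
  simp only [ofReal_re, one_pow, one_mul] at h
  linarith

end Vectors

open scoped MatrixOrder in
lemma posSemidefSqrtOld_eq_of_mul_self_eq {m : Type*} [Fintype m] [DecidableEq m]
    {A S : Matrix m m ℂ} (hA : A.PosSemidef) (hS : S.PosSemidef) (h : S * S = A) :
    posSemidefSqrtOld hA = S := by
  have hcfc : posSemidefSqrtOld hA = cfc Real.sqrt A := by
    rw [hA.1.cfc_eq]; rfl
  rw [hcfc, ← cfcₙ_eq_cfc, ← CFC.sqrt_eq_real_sqrt A hA.nonneg]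
  exact CFC.sqrt_unique h hS.nonneg

lemma nuclear_eq_re_trace {p q : ℕ} {M : Matrix (Fin p) (Fin q) ℂ} {S : Matrix (Fin q) (Fin q) ℂ}
    (hS : S.PosSemidef) (h : S * S = Mᴴ * M) : nuclear M = (trace S).re := by
  rw [nuclear, posSemidefSqrtOld_eq_of_mul_self_eq _ hS h]

lemma nuclear_zero {p q : ℕ} : nuclear (0 : Matrix (Fin p) (Fin q) ℂ) = 0 := by
  simpa using nuclear_eq_re_trace (M := (0 : Matrix (Fin p) (Fin q) ℂ)) PosSemidef.zero (by simp)

lemma nuclear_half_vecMulVec_add {n : ℕ} (p q : Fin n → ℂ) (hpq : (star p ⬝ᵥ q).im = 0) :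
    nuclear ((1 / 2 : ℂ) • (vecMulVec p (star q) + vecMulVec q (star p))) =
      √(∑ i, normSq (p i)) * √(∑ i, normSq (q i)) := by
  have hsq : ∀ v : Fin n → ℂ, star v ⬝ᵥ v = (√(∑ i, normSq (v i)) : ℂ) ^ 2 := fun v => by
    rw [star_dotProduct_self_eq_sum_normSq, ← ofReal_pow,
      Real.sq_sqrt (Finset.sum_nonneg fun i _ => normSq_nonneg _)]
  set α := √(∑ i, normSq (p i))
  set β := √(∑ i, normSq (q i))
  set M := (1 / 2 : ℂ) • (vecMulVec p (star q) + vecMulVec q (star p))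
  have hpp : star p ⬝ᵥ p = (α : ℂ) ^ 2 := hsq p
  have hqq : star q ⬝ᵥ q = (β : ℂ) ^ 2 := hsq q
  set r := (star p ⬝ᵥ q).re
  have hpq_re : star p ⬝ᵥ q = r := ext rfl hpq
  have hqp_re : star q ⬝ᵥ p = r := by rw [star_dotProduct_comm, hpq_re, conj_ofReal]
  rcases eq_or_ne (α * β) 0 with hαβ | hαβ
  · have hp_or_hq : p = 0 ∨ q = 0 := by
      simpa [← dotProduct_star_self_eq_zero, hpp, hqq] using hαβ
    rw [hαβ]
    rcases hp_or_hq with rfl | rfl <;> simp [M, nuclear_zero]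
  obtain ⟨hα, hβ⟩ := mul_ne_zero_iff.mp hαβ
  set S := (((2 * α * β)⁻¹ : ℝ) : ℂ) •
    (((β ^ 2 : ℝ) : ℂ) • vecMulVec p (star p) + ((α ^ 2 : ℝ) : ℂ) • vecMulVec q (star q))
  have hS : S.PosSemidef := by
    refine PosSemidef.smul ?_ (zero_le_real.mpr (by positivity))
    exact ((posSemidef_vecMulVec_self_star p).smul (zero_le_real.mpr (by positivity))).add
      ((posSemidef_vecMulVec_self_star q).smul (zero_le_real.mpr (by positivity)))
  have hM : Mᴴ = M := by
    simp only [M, conjTranspose_smul, conjTranspose_add, conjTranspose_vecMulVec, star_star]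
    rw [add_comm]; congr 1; simp
  have hSS : S * S = Mᴴ * M := by
    rw [hM]
    simp only [S, M, Matrix.smul_mul, Matrix.mul_smul, Matrix.add_mul, Matrix.mul_add,
      vecMulVec_mul_vecMulVec, vecMulVec_smul, hpp, hqq, hpq_re, hqp_re, smul_smul, smul_add]
    push_cast
    match_scalars <;> field_simp
  rw [nuclear_eq_re_trace hS hSS]
  simp only [S, trace_smul, trace_add, trace_vecMulVec, dotProduct_comm _ (star _), hpp, hqq,
    smul_eq_mul]
  norm_cast
  field_simp
  ring

lemma vecMulVec_self_star_sub {n : Type*} (x y : n → ℂ) :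
    vecMulVec x (star x) - vecMulVec y (star y) =
      (1 / 2 : ℂ) • (vecMulVec (x - y) (star (x + y)) + vecMulVec (x + y) (star (x - y))) := by
  ext i j
  simp only [Matrix.sub_apply, Matrix.smul_apply, Matrix.add_apply, vecMulVec_apply,
    Pi.star_apply, Pi.add_apply, Pi.sub_apply, star_add, star_sub, smul_eq_mul]
  ring

lemma nuclear_vecMulVec_self_star_sub {n : ℕ} (x y : Fin n → ℂ) (h : (star x ⬝ᵥ y).im = 0) :
    nuclear (vecMulVec x (star x) - vecMulVec y (star y)) =
      √(∑ i, normSq (x i - y i)) * √(∑ i, normSq (x i + y i)) := by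
  have him : (star (x - y) ⬝ᵥ (x + y)).im = 0 := by
    simp only [star_sub, sub_dotProduct, dotProduct_add, star_dotProduct_comm x y,
      star_dotProduct_self_eq_sum_normSq, sub_im, add_im, ofReal_im, conj_im, h]
    ring
  rw [vecMulVec_self_star_sub, nuclear_half_vecMulVec_add _ _ him]
  simp

lemma sqrt_sum_normSq_sub_mul_mul_sqrt_sum_normSq_add_mul {n : Type*} [Fintype n]
    (x y : n → ℂ) {u : ℂ} (hu : ‖u‖ = 1) :
    √(∑ i, normSq (x i - u * y i)) * √(∑ i, normSq (x i + u * y i)) =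
      √((∑ i, normSq (x i) + ∑ i, normSq (y i)) ^ 2 - 4 * (u * (star x ⬝ᵥ y)).re ^ 2) := by
  have hu' : normSq u = 1 := by rw [normSq_eq_norm_sq, hu, one_pow]
  have hsub := sum_normSq_add_mul x y (-u)
  simp only [neg_mul, ← sub_eq_add_neg, normSq_neg, hu', neg_re] at hsub
  rw [← Real.sqrt_mul (Finset.sum_nonneg fun i _ => normSq_nonneg _), hsub,
    sum_normSq_add_mul, hu']
  ring_nf

lemma nuclear_vecMulVec_self_star_sub_eq_sqrt {n : ℕ} (x y : Fin n → ℂ) :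
    nuclear (vecMulVec x (star x) - vecMulVec y (star y)) =
      √((∑ i, normSq (x i) + ∑ i, normSq (y i)) ^ 2 - 4 * normSq (star x ⬝ᵥ y)) := by
  obtain ⟨u, hu, huc⟩ := exists_norm_eq_one_mul_eq_norm (star x ⬝ᵥ y)
  have hrot : vecMulVec (u • y) (star (u • y)) = vecMulVec y (star y) := by
    have : u * conj u = 1 := by rw [mul_conj, normSq_eq_norm_sq, hu]; norm_num
    ext i j
    simp only [vecMulVec_apply, Pi.star_apply, Pi.smul_apply, smul_eq_mul, star_mul',
      star_def]
    linear_combination (y i * conj (y j)) * this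
  have him : (star x ⬝ᵥ (u • y)).im = 0 := by
    rw [dotProduct_smul, smul_eq_mul, huc, ofReal_im]
  rw [← hrot, nuclear_vecMulVec_self_star_sub x _ him]
  simpa [huc, ← normSq_eq_norm_sq] using sqrt_sum_normSq_sub_mul_mul_sqrt_sum_normSq_add_mul x y hu

lemma iInf_sqrt_sum_normSq_sub_mul_mul_sqrt_sum_normSq_add_mul {n : Type*} [Fintype n]
    (x y : n → ℂ) :
    ⨅ u : {c : ℂ // ‖c‖ = 1},
        √(∑ i, normSq (x i - u.1 * y i)) * √(∑ i, normSq (x i + u.1 * y i)) =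
      √((∑ i, normSq (x i) + ∑ i, normSq (y i)) ^ 2 - 4 * normSq (star x ⬝ᵥ y)) := by
  simp_rw [fun u : {c : ℂ // ‖c‖ = 1} => sqrt_sum_normSq_sub_mul_mul_sqrt_sum_normSq_add_mul x y u.2]
  obtain ⟨u₀, hu₀, hu₀c⟩ := exists_norm_eq_one_mul_eq_norm (star x ⬝ᵥ y)
  have : Nonempty {c : ℂ // ‖c‖ = 1} := ⟨⟨u₀, hu₀⟩⟩
  refine le_antisymm (ciInf_le_of_le ⟨0, ?_⟩ ⟨u₀, hu₀⟩ (le_of_eq ?_)) (le_ciInf fun u => ?_)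
  · rintro _ ⟨u, rfl⟩
    positivity
  · rw [hu₀c, ofReal_re, ← normSq_eq_norm_sq]
  · refine Real.sqrt_le_sqrt (sub_le_sub_left (mul_le_mul_of_nonneg_left ?_ (by norm_num)) _)
    calc (u.1 * star x ⬝ᵥ y).re ^ 2 ≤ ‖u.1 * star x ⬝ᵥ y‖ ^ 2 := by
          rw [← sq_abs]; gcongr; exact abs_re_le_norm _
      _ = normSq (star x ⬝ᵥ y) := by rw [norm_mul, u.2, one_mul, normSq_eq_norm_sq]

lemma sub_smul_one_eq_neg_smul {K k : Type*} [Field K] [Fintype k] [DecidableEq k]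
    (C : Matrix k k K) {l : K} (hl : l ≠ 0) : C - l • 1 = (-l) • (1 + (-l)⁻¹ • C) := by
  rw [smul_add, smul_smul, mul_inv_cancel₀ (neg_ne_zero.mpr hl), one_smul, neg_smul,
    sub_eq_add_neg, add_comm]

lemma det_mul_sub_smul_one_eq_zero_iff {K m n : Type*} [Field K] [Fintype m] [DecidableEq m]
    [Fintype n] [DecidableEq n] (A : Matrix m n K) (B : Matrix n m K) {l : K} (hl : l ≠ 0) :
    (A * B - l • 1).det = 0 ↔ (B * A - l • 1).det = 0 := by
  rw [sub_smul_one_eq_neg_smul _ hl, sub_smul_one_eq_neg_smul _ hl, det_smul, det_smul,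
    ← Matrix.mul_smul, det_one_add_mul_comm, Matrix.smul_mul]
  simp [hl]

lemma vecMulVec_self_star_sub_eq_mul {n : Type*} (x y : n → ℂ) :
    vecMulVec x (star x) - vecMulVec y (star y) = (of ![x, y])ᵀ * of ![star x, -star y] := by
  ext i j
  simp [Matrix.mul_apply, Fin.sum_univ_two, vecMulVec_apply, sub_eq_add_neg]

lemma det_vecMulVec_self_star_sub_sub_smul_one_eq_zero_iff {n : Type*} [Fintype n]
    [DecidableEq n] (x y : n → ℂ) {l : ℝ} (hl : l ≠ 0) :
    (vecMulVec x (star x) - vecMulVec y (star y) - (l : ℂ) • (1 : Matrix n n ℂ)).det = 0 ↔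
      l = 1 / 2 * (∑ i, normSq (x i) - ∑ i, normSq (y i) +
          √((∑ i, normSq (x i) + ∑ i, normSq (y i)) ^ 2 - 4 * normSq (star x ⬝ᵥ y))) ∨
      l = 1 / 2 * (∑ i, normSq (x i) - ∑ i, normSq (y i) -
          √((∑ i, normSq (x i) + ∑ i, normSq (y i)) ^ 2 - 4 * normSq (star x ⬝ᵥ y))) := by
  set a := ∑ i, normSq (x i)
  set b := ∑ i, normSq (y i)
  set c := star x ⬝ᵥ y
  have hBA : of ![star x, -star y] * (of ![x, y])ᵀ =
      !![star x ⬝ᵥ x, c; -star y ⬝ᵥ x, -star y ⬝ᵥ y] := by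
    ext i j
    fin_cases i <;> fin_cases j <;> rfl
  have hdet2 : ∀ p q r s : ℂ, (!![p, q; r, s] - (l : ℂ) • 1).det = (p - l) * (s - l) - q * r := by
    intro p q r s
    rw [det_fin_two]
    simp
  have ha : star x ⬝ᵥ x = a := star_dotProduct_self_eq_sum_normSq x
  have hb : star y ⬝ᵥ y = b := star_dotProduct_self_eq_sum_normSq y
  have hdet : (vecMulVec x (star x) - vecMulVec y (star y) - (l : ℂ) • 1).det = 0 ↔
      l * l + -(a - b) * l + (normSq c - a * b) = 0 := by
    rw [vecMulVec_self_star_sub_eq_mul, det_mul_sub_smul_one_eq_zero_iff _ _ (ofReal_ne_zero.mpr hl),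
      hBA, hdet2, neg_dotProduct, neg_dotProduct, ha, hb,
      star_dotProduct_comm x y, ← ofReal_eq_zero (z := _ + _)]
    push_cast
    rw [← mul_conj]
    constructor <;> intro h <;> linear_combination h
  have hdisc : discrim 1 (-(a - b)) (normSq c - a * b) =
      √((a + b) ^ 2 - 4 * normSq c) * √((a + b) ^ 2 - 4 * normSq c) := by
    have := two_mul_norm_dotProduct_le x y
    rw [Real.mul_self_sqrt, discrim]
    · ring
    · nlinarith [norm_nonneg c, normSq_eq_norm_sq c]
  rw [hdet, ← one_mul (l * l), quadratic_eq_zero_iff one_ne_zero hdisc]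
  ring_nf

/-- for vectors `x, y ∈ ℂⁿ`,
`‖x x* − y y*‖₁ = sqrt((‖x‖² + ‖y‖²)² − 4|⟨x,y⟩_ℂ|²)`, which equals
`min_{u ∈ U(1)} ‖x − u y‖₂ ‖x + u y‖₂`; equivalently, the nonzero eigenvalues of
`x x* − y y*` are `λ± = ½(‖x‖² − ‖y‖² ± sqrt((‖x‖²+‖y‖²)² − 4|⟨x,y⟩_ℂ|²))`. -/
theorem nuclear_rank_one_difference (n : ℕ) (x y : Fin n → ℂ) :
    nuclear (Matrix.vecMulVec x (star x) - Matrix.vecMulVec y (star y)) =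
      Real.sqrt (((∑ i, Complex.normSq (x i)) + ∑ i, Complex.normSq (y i)) ^ 2
        - 4 * Complex.normSq (star x ⬝ᵥ y)) ∧
    nuclear (Matrix.vecMulVec x (star x) - Matrix.vecMulVec y (star y)) =
      (⨅ u : {c : ℂ // ‖c‖ = 1},
        Real.sqrt (∑ i, Complex.normSq (x i - u.1 * y i)) *
        Real.sqrt (∑ i, Complex.normSq (x i + u.1 * y i))) ∧
    (∀ lam : ℝ, lam ≠ 0 →
      ((Matrix.vecMulVec x (star x) - Matrix.vecMulVec y (star y)
          - (lam : ℂ) • (1 : Matrix (Fin n) (Fin n) ℂ)).det = 0 ↔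
        lam = (1 / 2) * ((∑ i, Complex.normSq (x i)) - (∑ i, Complex.normSq (y i))
            + Real.sqrt (((∑ i, Complex.normSq (x i)) + ∑ i, Complex.normSq (y i)) ^ 2
              - 4 * Complex.normSq (star x ⬝ᵥ y))) ∨
        lam = (1 / 2) * ((∑ i, Complex.normSq (x i)) - (∑ i, Complex.normSq (y i))
            - Real.sqrt (((∑ i, Complex.normSq (x i)) + ∑ i, Complex.normSq (y i)) ^ 2
              - 4 * Complex.normSq (star x ⬝ᵥ y))))) := by
  refine ⟨nuclear_vecMulVec_self_star_sub_eq_sqrt x y, ?_,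
    fun lam hlam => det_vecMulVec_self_star_sub_sub_smul_one_eq_zero_iff x y hlam⟩
  rw [nuclear_vecMulVec_self_star_sub_eq_sqrt,
    iInf_sqrt_sum_normSq_sub_mul_mul_sqrt_sum_normSq_add_mul]
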